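/- The natural map HS^2(G,A) → H^2(G,A) induced by the inclusion of the symmetric cochain subcomplex is injective. -/
import Mathlib


/-- The natural map `HS²(G,A) → H²(G,A)` induced by the inclusion of the symmetric cochain
subcomplex is injective: a symmetric 2-cocycle which is a coboundary `∂φ` of a 1-cochain
`φ ∈ C¹(G,A)` is also the coboundary of a symmetric 1-cochain `φ ∈ CS¹(G,A)`,
i.e. one with `φ(g) = -g•φ(g⁻¹)`. -/
theorem HS2_to_H2_injective {G A : Type} [Group G] [AddCommGroup A] [DistribMulAction G A]
    (σ : G → G → A)
    (hsym12 : ∀ x y : G, σ x y = -(x • σ x⁻¹ (x * y)))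
    (hsym23 : ∀ x y : G, σ x y = -σ (x * y) y⁻¹)
    (hcocycle : ∀ x y z : G, x • σ y z - σ (x * y) z + σ x (y * z) - σ x y = 0)
    (hcoboundary : ∃ φ : G → A, ∀ x y : G, σ x y = x • φ y - φ (x * y) + φ x) :
    ∃ φ : G → A, (∀ g : G, φ g = -(g • φ g⁻¹)) ∧
      ∀ x y : G, σ x y = x • φ y - φ (x * y) + φ x := by
  obtain ⟨φ, hφ⟩ := hcoboundary
  refine ⟨φ, fun g => ?_, hφ⟩
  have h := hsym23 1 g
  rw [hφ, hφ] at h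
  simp only [one_mul, one_smul, mul_inv_cancel, sub_self, zero_add] at h
  have h2 : g • φ g⁻¹ - φ 1 + φ g = -φ 1 := (neg_eq_iff_eq_neg.mp h.symm)
  have h3 : φ g + g • φ g⁻¹ = 0 := by
    have := congrArg (· + φ 1) h2
    simpa [add_comm, add_left_comm, sub_eq_add_neg, add_assoc] using this
  exact eq_neg_of_add_eq_zero_left h3
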